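/- Let d ≥ 1 and p ≥ 0 be integers and let γ ∈ (0,1]. There exists a constant C = C(d,p,γ) such that for every h > 0, every axis-parallel closed cube T ⊂ ℝ^d of side length h, every Lebesgue-measurable subset ω ⊆ T with |ω| ≥ γ h^d, and every polynomial q on ℝ^d of degree at most p in each variable, one has ∫_T q(x)² dx ≤ C ∫_ω q(x)² dx. -/

import Mathlib

/-
A nonzero polynomial vanishes only on a Lebesgue-null set (induction on the number of variables,
slicing with Fubini). Hence, for a nonzero `q ∈ ℚ_p` seen in `C(T, ℝ)`, `T` the unit cube, the set
`{|q| ≤ r}` has measure `< γ / 2` for small `r`, which bounds `∫_ω g²` below uniformly over all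
`ω ⊆ T` with `|ω| ≥ γ` and all `g` in a sup-norm ball around `q`. The unit sphere of the
finite-dimensional space `ℚ_p` is compact, so `ε ‖q‖²_∞ ≤ ∫_ω q²` for a single `ε > 0`, while
`∫_T q² ≤ |T| ‖q‖²_∞`. The map `y ↦ a + h • y` carries the unit cube onto a cube of side `h`,
preserves `ℚ_p`, and scales measures and integrals alike by `h ^ d`.
-/

open MeasureTheory

noncomputable section

/-- The axis-parallel closed cube in `ℝ^d` with lower corner `a` and side length `h`. -/
def cube (d : ℕ) (h : ℝ) (a : EuclideanSpace ℝ (Fin d)) : Set (EuclideanSpace ℝ (Fin d)) :=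
  {x | ∀ i, a i ≤ x i ∧ x i ≤ a i + h}

/-- `q : ℝ^d → ℝ` is a polynomial function of degree at most `p` in each variable. -/
def IsQp (d p : ℕ) (q : EuclideanSpace ℝ (Fin d) → ℝ) : Prop :=
  ∃ P : MvPolynomial (Fin d) ℝ, (∀ i, P.degreeOf i ≤ p) ∧
    ∀ x : EuclideanSpace ℝ (Fin d), q x = MvPolynomial.eval (fun i => x i) P

open Topology Filter

namespace MvPolynomial

theorem volume_setOf_eval_eq_zero {n : ℕ} {P : MvPolynomial (Fin n) ℝ} (hP : P ≠ 0) :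
    volume {x : Fin n → ℝ | eval x P = 0} = 0 := by
  induction n with
  | zero =>
    obtain ⟨c, rfl⟩ := C_surjective (Fin 0) P
    have hc : c ≠ 0 := by rintro rfl; exact hP C_0
    simp [hc]
  | succ n ih =>
    set Q := finSuccEquiv ℝ n P
    have hQ : Q.leadingCoeff ≠ 0 := by simpa [Q] using hP
    -- In coordinates `(y, s) ↦ Fin.cons y s` the zero set is sliced into roots of `Q(s) ∈ ℝ[y]`.
    set S : Set (ℝ × (Fin n → ℝ)) := {z | eval (Fin.cons z.1 z.2) P = 0}
    have hS : MeasurableSet S :=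
      measurableSet_eq_fun ((continuous_eval P).comp
        (continuous_fst.finCons continuous_snd)).measurable measurable_const
    have hpre : MeasurableEquiv.piFinSuccAbove (fun _ => ℝ) 0 ⁻¹' S = {x | eval x P = 0} := by
      ext x; simp [S, MeasurableEquiv.piFinSuccAbove_apply, Fin.insertNthEquiv_zero]
    rw [← hpre, volume_pi,
      (measurePreserving_piFinSuccAbove (fun _ => volume) 0).measure_preimage hS.nullMeasurableSet,
      Measure.prod_apply_symm hS]
    refine (lintegral_congr_ae ?_).trans lintegral_zero
    filter_upwards [measure_eq_zero_iff_ae_notMem.mp (ih hQ)] with s hs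
    have hQs : Q.map (eval s) ≠ 0 := fun h => hs (by simpa using congrArg (·.coeff Q.natDegree) h)
    refine measure_mono_null (fun y hy => ?_)
      ((Polynomial.finite_setOfPred_isRoot hQs).measure_zero _)
    simpa [S, eval_eq_eval_mv_eval'] using hy

theorem volume_setOf_eval_ofLp_eq_zero {n : ℕ} {P : MvPolynomial (Fin n) ℝ} (hP : P ≠ 0) :
    volume {x : EuclideanSpace ℝ (Fin n) | eval (fun i => x i) P = 0} = 0 :=
  ((EuclideanSpace.volume_preserving_symm_measurableEquiv_toLp (Fin n)).measure_preimage_equiv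
    _).trans (volume_setOf_eval_eq_zero hP)

variable {σ R : Type*} [CommSemiring R]

theorem mem_restrictDegree_iff_degreeOf_le {P : MvPolynomial σ R} {n : ℕ} :
    P ∈ restrictDegree σ R n ↔ ∀ i, P.degreeOf i ≤ n := by
  simp only [mem_restrictDegree, degreeOf_le_iff]
  exact ⟨fun h i m hm => h m hm i, fun h m hm i => h i m hm⟩

theorem degreeOf_bind₁_le [DecidableEq σ] {f : σ → MvPolynomial σ R}
    (hf : ∀ i j, (f j).degreeOf i ≤ if i = j then 1 else 0) (P : MvPolynomial σ R) (i : σ) :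
    (bind₁ f P).degreeOf i ≤ P.degreeOf i := by
  conv_lhs => rw [P.as_sum, map_sum]
  refine (degreeOf_sum_le _ _ _).trans (Finset.sup_le fun m hm => ?_)
  rw [bind₁_monomial]
  refine (degreeOf_C_mul_le _ _ _).trans ((degreeOf_prod_le _ _ _).trans ?_)
  calc ∑ j ∈ m.support, (f j ^ m j).degreeOf i
      ≤ ∑ j ∈ m.support, if i = j then m j else 0 := Finset.sum_le_sum fun j _ =>
        (degreeOf_pow_le _ _ _).trans (by simpa using Nat.mul_le_mul_left (m j) (hf i j))
    _ ≤ m i := by rw [Finset.sum_ite_eq]; split_ifs <;> simp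
    _ ≤ P.degreeOf i := monomial_le_degreeOf i hm

theorem degreeOf_C_add_C_mul_X_le [DecidableEq σ] (a h : R) (i j : σ) :
    (C a + C h * X j : MvPolynomial σ R).degreeOf i ≤ if i = j then 1 else 0 := by
  refine (degreeOf_add_le _ _ _).trans (max_le (by simp) ?_)
  refine (degreeOf_C_mul_le _ _ _).trans ?_
  rcases subsingleton_or_nontrivial R with hR | hR
  · simp [Subsingleton.elim (X j : MvPolynomial σ R) 0]
  · rw [degreeOf_X]

def toContinuousMapOnₗ {d : ℕ} (s : Set (EuclideanSpace ℝ (Fin d))) :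
    MvPolynomial (Fin d) ℝ →ₗ[ℝ] C(s, ℝ) where
  toFun P := ⟨fun x => eval (fun i => (x : EuclideanSpace ℝ (Fin d)) i) P,
    (continuous_eval P).comp (by fun_prop)⟩
  map_add' P Q := by ext; simp
  map_smul' c P := by ext; simp

theorem toContinuousMapOnₗ_apply {d : ℕ} (s : Set (EuclideanSpace ℝ (Fin d)))
    (P : MvPolynomial (Fin d) ℝ) (x : s) :
    toContinuousMapOnₗ s P x = eval (fun i => (x : EuclideanSpace ℝ (Fin d)) i) P :=
  rfl

end MvPolynomial

open MvPolynomial in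
theorem IsQp.comp_affine {d p : ℕ} {q : EuclideanSpace ℝ (Fin d) → ℝ} (hq : IsQp d p q)
    (a : EuclideanSpace ℝ (Fin d)) (h : ℝ) : IsQp d p (fun y => q (a + h • y)) := by
  obtain ⟨P, hP, hqP⟩ := hq
  let f : Fin d → MvPolynomial (Fin d) ℝ := fun j => C (a j) + C h * X j
  refine ⟨bind₁ f P, fun i => ?_, fun y => ?_⟩
  · have := degreeOf_bind₁_le (f := f) (fun i j => degreeOf_C_add_C_mul_X_le (a j) h i j) P i
    exact this.trans (hP i)
  · show q (a + h • y) = _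
    rw [hqP, eval, eval, eval₂Hom_bind₁]
    congr 2
    funext j
    simp [f]

theorem IsCompact.exists_pos_forall_of_forall_eventually {X : Type*} [TopologicalSpace X]
    {s : Set X} (hs : IsCompact s) {P : ℝ → X → Prop}
    (hP : ∀ x, Antitone fun ε => P ε x) (h : ∀ x ∈ s, ∃ ε > 0, ∀ᶠ y in 𝓝 x, P ε y) :
    ∃ ε > 0, ∀ x ∈ s, P ε x := by
  refine hs.induction_on (p := fun t => ∃ ε > 0, ∀ x ∈ t, P ε x) ⟨1, one_pos, by simp⟩
    (fun t t' htt' ⟨ε, hε, ht'⟩ => ⟨ε, hε, fun x hx => ht' x (htt' hx)⟩)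
    (fun t t' ⟨ε, hε, ht⟩ ⟨ε', hε', ht'⟩ => ⟨min ε ε', lt_min hε hε', ?_⟩) fun x hx => ?_
  · rintro x (hx | hx)
    exacts [hP x (min_le_left _ _) (ht x hx), hP x (min_le_right _ _) (ht' x hx)]
  · obtain ⟨ε, hε, hx⟩ := h x hx
    exact ⟨_, mem_nhdsWithin_of_mem_nhds hx, ε, hε, fun y hy => hy⟩

section ContinuousFunctions

variable {K : Type*} [TopologicalSpace K] [CompactSpace K] [MeasurableSpace K]
  [OpensMeasurableSpace K] {ν : Measure K} [IsFiniteMeasure ν] {γ : ℝ}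

theorem ContinuousMap.integrable_sq (g : C(K, ℝ)) : Integrable (fun x => g x ^ 2) ν :=
  (g.continuous.pow 2).integrable_of_hasCompactSupport (HasCompactSupport.of_compactSpace _)

theorem exists_pos_eventually_le_setIntegral_sq {f : C(K, ℝ)} (hf : ν {x | f x = 0} = 0)
    (hγ : 0 < γ) : ∃ ε > 0, ∀ᶠ g in 𝓝 f, ∀ ω, MeasurableSet ω → ENNReal.ofReal γ ≤ ν ω →
      ε ≤ ∫ x in ω, g x ^ 2 ∂ν := by
  have hlim : Tendsto (fun r => ν {x | |f x| ≤ r}) (𝓝[>] 0) (𝓝 0) := by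
    have := tendsto_measure_biInter_gt (μ := ν) (s := fun r : ℝ => {x | |f x| ≤ r}) (a := 0)
      (fun r _ => (measurableSet_le (by fun_prop) measurable_const).nullMeasurableSet)
      (fun r r' _ hrr' x hx => hx.trans hrr') ⟨1, one_pos, measure_ne_top _ _⟩
    have hinter : ⋂ r > (0 : ℝ), {x | |f x| ≤ r} = {x | f x = 0} := by
      ext x
      simpa using forall_gt_imp_ge_iff_le_of_dense.trans (abs_nonpos_iff (a := f x))
    rwa [hinter, hf] at this
  obtain ⟨r, hrA, hr⟩ :=
    ((hlim.eventually (gt_mem_nhds (ENNReal.ofReal_pos.mpr (half_pos hγ)))).and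
      self_mem_nhdsWithin).exists
  set A := {x | |f x| ≤ r}
  refine ⟨(r / 2) ^ 2 * (γ / 2), by positivity, ?_⟩
  filter_upwards [Metric.ball_mem_nhds f (half_pos hr)] with g hg ω hω hνω
  have hgA : ∀ x ∈ ω \ A, (r / 2) ^ 2 ≤ g x ^ 2 := fun x hx => by
    have hfx : r < |f x| := lt_of_not_ge hx.2
    have hgf : |g x - f x| < r / 2 := (ContinuousMap.dist_apply_le_dist x).trans_lt hg
    have hgx : r / 2 ≤ |g x| := by
      linarith [abs_sub_abs_le_abs_sub (f x) (g x), abs_sub_comm (g x) (f x)]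
    rw [← sq_abs (g x)]
    exact pow_le_pow_left₀ (by positivity) hgx 2
  have hνωA : γ / 2 ≤ ν.real (ω \ A) := by
    rw [measureReal_def, ← ENNReal.ofReal_le_iff_le_toReal (measure_ne_top _ _)]
    calc ENNReal.ofReal (γ / 2) = ENNReal.ofReal γ - ENNReal.ofReal (γ / 2) := by
          rw [← ENNReal.ofReal_sub _ (by positivity), sub_half]
      _ ≤ ν ω - ν A := tsub_le_tsub hνω hrA.le
      _ ≤ ν (ω \ A) := le_measure_sdiff
  have hint := g.integrable_sq (ν := ν)
  calc (r / 2) ^ 2 * (γ / 2) ≤ (r / 2) ^ 2 * ν.real (ω \ A) := by gcongr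
    _ ≤ ∫ x in ω \ A, g x ^ 2 ∂ν := setIntegral_ge_of_const_le_real
        (hω.diff (measurableSet_le (by fun_prop) measurable_const)) (measure_ne_top _ _) hgA
        hint.integrableOn
    _ ≤ ∫ x in ω, g x ^ 2 ∂ν := setIntegral_mono_set hint.integrableOn
        (Eventually.of_forall fun x => sq_nonneg _) Set.sdiff_subset.eventuallyLE

theorem exists_pos_forall_norm_eq_one_le_setIntegral_sq (W : Submodule ℝ C(K, ℝ))
    [FiniteDimensional ℝ W] (hW : ∀ f ∈ W, f ≠ 0 → ν {x | f x = 0} = 0) (hγ : 0 < γ) :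
    ∃ ε > 0, ∀ f ∈ W, ‖f‖ = 1 → ∀ ω, MeasurableSet ω → ENNReal.ofReal γ ≤ ν ω →
      ε ≤ ∫ x in ω, f x ^ 2 ∂ν := by
  obtain ⟨ε, hε, h⟩ := ((isCompact_sphere (0 : W) 1).image continuous_subtype_val)
    |>.exists_pos_forall_of_forall_eventually
      (P := fun ε g => ∀ ω, MeasurableSet ω → ENNReal.ofReal γ ≤ ν ω → ε ≤ ∫ x in ω, g x ^ 2 ∂ν)
      (fun g ε' ε hεε' hg ω hω hνω => hεε'.trans (hg ω hω hνω))
      (by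
        rintro _ ⟨f, hf, rfl⟩
        refine exists_pos_eventually_le_setIntegral_sq (hW f f.2 ?_) hγ
        rintro hf0
        simp [hf0] at hf)
  exact ⟨ε, hε, fun f hf hf1 => h f ⟨⟨f, hf⟩, by simpa using hf1, rfl⟩⟩

theorem exists_integral_sq_le_mul_setIntegral_sq (W : Submodule ℝ C(K, ℝ))
    [FiniteDimensional ℝ W] (hW : ∀ f ∈ W, f ≠ 0 → ν {x | f x = 0} = 0) (hγ : 0 < γ) :
    ∃ C > 0, ∀ f ∈ W, ∀ ω, MeasurableSet ω → ENNReal.ofReal γ ≤ ν ω →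
      ∫ x, f x ^ 2 ∂ν ≤ C * ∫ x in ω, f x ^ 2 ∂ν := by
  obtain ⟨ε, hε, h⟩ := exists_pos_forall_norm_eq_one_le_setIntegral_sq W hW hγ
  refine ⟨ν.real Set.univ / ε + 1, by positivity, fun f hf ω hω hνω => ?_⟩
  have hlow : ε * ‖f‖ ^ 2 ≤ ∫ x in ω, f x ^ 2 ∂ν := by
    rcases eq_or_ne f 0 with rfl | hf0
    · simp
    have hnorm : ‖‖f‖⁻¹ • f‖ = 1 := norm_smul_inv_norm hf0
    have hsq : ∀ x, f x ^ 2 = ‖f‖ ^ 2 * (‖f‖⁻¹ • f) x ^ 2 := fun x => by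
      simp [mul_pow, norm_ne_zero_iff.mpr hf0]
    simp_rw [hsq, integral_const_mul]
    nlinarith [h _ (W.smul_mem _ hf) hnorm ω hω hνω, sq_nonneg ‖f‖]
  have hup : ∫ x, f x ^ 2 ∂ν ≤ ν.real Set.univ * ‖f‖ ^ 2 := by
    calc ∫ x, f x ^ 2 ∂ν ≤ ∫ _, ‖f‖ ^ 2 ∂ν := integral_mono f.integrable_sq (integrable_const _)
          fun x => by
            rw [← sq_abs, ← Real.norm_eq_abs]
            exact pow_le_pow_left₀ (norm_nonneg _) (f.norm_coe_le_norm x) 2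
      _ = ν.real Set.univ * ‖f‖ ^ 2 := by simp
  have hint : 0 ≤ ∫ x in ω, f x ^ 2 ∂ν := integral_nonneg fun x => sq_nonneg _
  calc ∫ x, f x ^ 2 ∂ν ≤ ν.real Set.univ / ε * (ε * ‖f‖ ^ 2) := hup.trans_eq (by field_simp)
    _ ≤ ν.real Set.univ / ε * ∫ x in ω, f x ^ 2 ∂ν := by gcongr
    _ ≤ (ν.real Set.univ / ε + 1) * ∫ x in ω, f x ^ 2 ∂ν := by nlinarith

end ContinuousFunctions

theorem cube_eq_preimage_Icc (d : ℕ) (h : ℝ) (a : EuclideanSpace ℝ (Fin d)) :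
    cube d h a = (EuclideanSpace.equiv (Fin d) ℝ) ⁻¹' Set.Icc (a.ofLp) (a.ofLp + fun _ => h) := by
  ext x
  simp [cube, Pi.le_def, forall_and]

theorem isCompact_cube (d : ℕ) (h : ℝ) (a : EuclideanSpace ℝ (Fin d)) :
    IsCompact (cube d h a) := by
  rw [cube_eq_preimage_Icc]
  exact (EuclideanSpace.equiv (Fin d) ℝ).toHomeomorph.isCompact_preimage.mpr isCompact_Icc

theorem preimage_affine_cube {d : ℕ} {h : ℝ} (hh : 0 < h) (a : EuclideanSpace ℝ (Fin d)) :
    (fun y => a + h • y) ⁻¹' cube d h a = cube d 1 0 := by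
  ext y
  simp [cube, hh]

section Affine

variable {E : Type*} [NormedAddCommGroup E] [NormedSpace ℝ E] [MeasurableSpace E] [BorelSpace E]
  {h : ℝ}

theorem measurableEmbedding_affine (hh : h ≠ 0) (a : E) :
    MeasurableEmbedding (fun y => a + h • y) :=
  ((Homeomorph.smulOfNeZero h hh).trans (Homeomorph.addLeft a)).measurableEmbedding

variable [FiniteDimensional ℝ E] (μ : Measure E) [μ.IsAddHaarMeasure]

theorem MeasureTheory.Measure.map_affine_addHaar (hh : h ≠ 0) (a : E) :
    μ.map (fun y => a + h • y) = ENNReal.ofReal |(h ^ Module.finrank ℝ E)⁻¹| • μ := by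
  have : (fun y : E => a + h • y) = (a + ·) ∘ (h • ·) := rfl
  rw [this, ← Measure.map_map (by fun_prop) (by fun_prop), Measure.map_addHaar_smul μ hh,
    Measure.map_smul, map_add_left_eq_self]

theorem MeasureTheory.Measure.addHaar_preimage_affine (hh : h ≠ 0) (a : E) (s : Set E) :
    μ ((fun y => a + h • y) ⁻¹' s) = ENNReal.ofReal |(h ^ Module.finrank ℝ E)⁻¹| * μ s := by
  rw [← (measurableEmbedding_affine hh a).map_apply, Measure.map_affine_addHaar μ hh,
    Measure.smul_apply, smul_eq_mul]

theorem setIntegral_comp_affine (hh : h ≠ 0) (a : E) (g : E → ℝ) (s : Set E) :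
    ∫ y in (fun y => a + h • y) ⁻¹' s, g (a + h • y) ∂μ =
      |(h ^ Module.finrank ℝ E)⁻¹| * ∫ x in s, g x ∂μ := by
  rw [← (measurableEmbedding_affine hh a).setIntegral_map, Measure.map_affine_addHaar μ hh,
    Measure.restrict_smul, integral_smul_measure, ENNReal.toReal_ofReal (abs_nonneg _),
    smul_eq_mul]

end Affine

theorem setIntegral_comap_subtype_val {α F : Type*} [MeasurableSpace α] [NormedAddCommGroup F]
    [NormedSpace ℝ F] {μ : Measure α} {T ω : Set α} (hT : MeasurableSet T) (hω : ω ⊆ T)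
    (g : α → F) : ∫ x in (↑) ⁻¹' ω, g x ∂(μ.comap ((↑) : T → α)) = ∫ x in ω, g x ∂μ := by
  rw [← (MeasurableEmbedding.subtype_coe hT).setIntegral_map,
    (MeasurableEmbedding.subtype_coe hT).map_comap, Subtype.range_coe,
    Measure.restrict_restrict_of_subset hω]

open MvPolynomial in
theorem exists_setIntegral_sq_le_mul_setIntegral_sq_of_isCompact {d : ℕ} (p : ℕ)
    {T : Set (EuclideanSpace ℝ (Fin d))} (hT : IsCompact T) {γ : ℝ} (hγ : 0 < γ) :
    ∃ C > 0, ∀ ω, MeasurableSet ω → ω ⊆ T → ENNReal.ofReal γ ≤ volume ω →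
      ∀ q, IsQp d p q → ∫ x in T, q x ^ 2 ≤ C * ∫ x in ω, q x ^ 2 := by
  have hTm := hT.isClosed.measurableSet
  have : CompactSpace T := isCompact_iff_compactSpace.mp hT
  set ν := volume.comap ((↑) : T → EuclideanSpace ℝ (Fin d))
  have : IsFiniteMeasure ν := ⟨by
    rw [comap_subtype_coe_apply hTm, Set.image_univ, Subtype.range_coe]
    exact hT.measure_lt_top⟩
  let W := (restrictDegree (Fin d) ℝ p).map (toContinuousMapOnₗ T)
  have hW : ∀ f ∈ W, f ≠ 0 → ν {x | f x = 0} = 0 := by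
    rintro _ ⟨P, -, rfl⟩ hf
    have hP : P ≠ 0 := by rintro rfl; exact hf (map_zero _)
    rw [comap_subtype_coe_apply hTm]
    exact measure_mono_null (by rintro _ ⟨x, hx, rfl⟩; exact hx)
      (volume_setOf_eval_ofLp_eq_zero hP)
  obtain ⟨C, hC, hWC⟩ := exists_integral_sq_le_mul_setIntegral_sq W hW hγ
  refine ⟨C, hC, fun ω hω hωT hγω q ⟨P, hP, hqP⟩ => ?_⟩
  have := hWC (toContinuousMapOnₗ T P) ⟨P, mem_restrictDegree_iff_degreeOf_le.mpr hP, rfl⟩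
    ((↑) ⁻¹' ω) (measurable_subtype_coe hω)
    (by rwa [comap_subtype_coe_apply hTm, Subtype.image_preimage_coe, Set.inter_eq_right.mpr hωT])
  simp only [toContinuousMapOnₗ_apply, ← hqP] at this
  calc ∫ x in T, q x ^ 2 = ∫ x : T, q x ^ 2 ∂ν := (integral_subtype_comap hTm _).symm
    _ ≤ C * ∫ x in (↑) ⁻¹' ω, q x ^ 2 ∂ν := this
    _ = C * ∫ x in ω, q x ^ 2 := by rw [← setIntegral_comap_subtype_val hTm hωT]

theorem statement0_general (d p : ℕ) (γ : ℝ) (hγ : 0 < γ) :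
    ∃ C : ℝ, 0 < C ∧ ∀ h : ℝ, 0 < h → ∀ a : EuclideanSpace ℝ (Fin d),
      ∀ ω : Set (EuclideanSpace ℝ (Fin d)), MeasurableSet ω → ω ⊆ cube d h a →
        ENNReal.ofReal (γ * h ^ d) ≤ volume ω →
        ∀ q : EuclideanSpace ℝ (Fin d) → ℝ, IsQp d p q →
          ∫ x in cube d h a, q x ^ 2 ≤ C * ∫ x in ω, q x ^ 2 := by
  obtain ⟨C, hC, hunit⟩ :=
    exists_setIntegral_sq_le_mul_setIntegral_sq_of_isCompact p (isCompact_cube d 1 0) hγ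
  refine ⟨C, hC, fun h hh a ω hω hωT hγω q hq => ?_⟩
  have hJ : |(h ^ Module.finrank ℝ (EuclideanSpace ℝ (Fin d)))⁻¹| = (h ^ d)⁻¹ := by
    rw [finrank_euclideanSpace_fin, abs_of_pos (by positivity)]
  have hvol : ENNReal.ofReal γ ≤ volume ((fun y => a + h • y) ⁻¹' ω) := by
    rw [Measure.addHaar_preimage_affine volume hh.ne', hJ]
    calc ENNReal.ofReal γ = ENNReal.ofReal (h ^ d)⁻¹ * ENNReal.ofReal (γ * h ^ d) := by
          rw [← ENNReal.ofReal_mul (by positivity)]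
          field_simp
      _ ≤ _ := by gcongr
  have key := hunit _ (hω.preimage (measurableEmbedding_affine hh.ne' a).measurable)
    (preimage_affine_cube hh a ▸ Set.preimage_mono hωT) hvol _ (hq.comp_affine a h)
  rw [← preimage_affine_cube hh a, setIntegral_comp_affine volume hh.ne' a (fun x => q x ^ 2),
    setIntegral_comp_affine volume hh.ne' a (fun x => q x ^ 2), hJ, mul_left_comm] at key
  exact le_of_mul_le_mul_left key (by positivity)

theorem statement0 (d p : ℕ) (hd : 1 ≤ d) (γ : ℝ) (hγ : 0 < γ) (hγ1 : γ ≤ 1) :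
    ∃ C : ℝ, 0 < C ∧ ∀ h : ℝ, 0 < h → ∀ a : EuclideanSpace ℝ (Fin d),
      ∀ ω : Set (EuclideanSpace ℝ (Fin d)), MeasurableSet ω → ω ⊆ cube d h a →
        ENNReal.ofReal (γ * h ^ d) ≤ volume ω →
        ∀ q : EuclideanSpace ℝ (Fin d) → ℝ, IsQp d p q →
          ∫ x in cube d h a, q x ^ 2 ≤ C * ∫ x in ω, q x ^ 2 :=
  statement0_general d p γ hγ
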